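/- arXiv:2506.13225 — 8 statements merged into one kernel-verified Lean document; each statement's English description precedes it below -/
import Mathlib

section
/- Let (Bₙ)ₙ be a sequence of Borel probability measures on [0,1] converging weakly to a probability measure B∞ (that is, ∫ ψ dBₙ → ∫ ψ dB∞ for every continuous function ψ on [0,1]), and let (x₁ⁿ)ₙ, (x₂ⁿ)ₙ be sequences in ℝ≥0 converging to x₁^∞ and x₂^∞ respectively. Then for every continuous compactly supported function φ : ℝ≥0 → ℝ, we have ∫ φ d(K_{Bₙ}[x₁ⁿ, x₂ⁿ]) → ∫ φ d(K_{B∞}[x₁^∞, x₂^∞]) as n → ∞. -/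
open MeasureTheory Filter Topology

/-- The transfer kernel `K_B[x₁,x₂]`: the pushforward of `B ⊗ B` under
`(z₁, z₂) ↦ x₁ (1 - z₁) + x₂ z₂`. -/
noncomputable def transferK (B : Measure ℝ) (x₁ x₂ : ℝ) : Measure ℝ :=
  Measure.map (fun p : ℝ × ℝ => x₁ * (1 - p.1) + x₂ * p.2) (B.prod B)

/-- A bounded a.e. strongly measurable function is integrable w.r.t. a finite measure. -/
lemma bdd_integrable {α : Type*} [MeasurableSpace α] (μ : Measure α) [IsFiniteMeasure μ]
    {f : α → ℝ} {C : ℝ} (hm : AEStronglyMeasurable f μ) (h : ∀ x, |f x| ≤ C) :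
    Integrable f μ :=
  (integrable_const C).mono' hm (ae_of_all _ fun x => by simpa [Real.norm_eq_abs] using h x)

/-- For a probability measure, an a.e. bound on `|f|` bounds `|∫ f|`. -/
lemma abs_integral_le' {α : Type*} [MeasurableSpace α] (μ : Measure α) [IsProbabilityMeasure μ]
    {f : α → ℝ} {c : ℝ} (h : ∀ᵐ x ∂μ, |f x| ≤ c) : |∫ x, f x ∂μ| ≤ c := by
  have := norm_integral_le_of_norm_le_const (μ := μ) (f := f) (C := c)
    (by simpa [Real.norm_eq_abs] using h)
  simpa [Real.norm_eq_abs] using this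

/-- Equicontinuity estimate for the partial integrals. -/
lemma est (μ : Measure ℝ) [IsProbabilityMeasure μ] {φ : ℝ → ℝ} (hφc : Continuous φ)
    {C : ℝ} (hC : ∀ x, |φ x| ≤ C) {ε δ : ℝ}
    (hδ : ∀ s t : ℝ, |s - t| < δ → |φ s - φ t| ≤ ε) (c d t s : ℝ)
    (h : |c| * |t - s| < δ) :
    |(∫ z, φ (c * (1 - t) + d * z) ∂μ) - ∫ z, φ (c * (1 - s) + d * z) ∂μ| ≤ ε := by
  have i1 : Integrable (fun z => φ (c * (1 - t) + d * z)) μ :=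
    bdd_integrable μ (hφc.comp (by continuity)).aestronglyMeasurable (fun z => hC _)
  have i2 : Integrable (fun z => φ (c * (1 - s) + d * z)) μ :=
    bdd_integrable μ (hφc.comp (by continuity)).aestronglyMeasurable (fun z => hC _)
  rw [← integral_sub i1 i2]
  apply abs_integral_le'
  refine ae_of_all _ fun z => hδ _ _ ?_
  have harg : (c * (1 - t) + d * z) - (c * (1 - s) + d * z) = c * (s - t) := by ring
  calc |(c * (1 - t) + d * z) - (c * (1 - s) + d * z)| = |c| * |s - t| := by
        rw [harg, abs_mul]
    _ = |c| * |t - s| := by rw [abs_sub_comm]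
    _ < δ := h

/-- Continuity of the partial integral in the parameter. -/
lemma Hcont (μ : Measure ℝ) [IsProbabilityMeasure μ] {φ : ℝ → ℝ} (hφc : Continuous φ)
    (hφu : UniformContinuous φ) {C : ℝ} (hC : ∀ x, |φ x| ≤ C) (c d : ℝ) :
    Continuous fun t => ∫ z, φ (c * (1 - t) + d * z) ∂μ := by
  apply UniformContinuous.continuous
  rw [Metric.uniformContinuous_iff]
  intro ε hε
  obtain ⟨δ, hδpos, hδ0⟩ := Metric.uniformContinuous_iff.mp hφu (ε / 2) (by positivity)
  have hδ : ∀ s t : ℝ, |s - t| < δ → |φ s - φ t| ≤ ε / 2 := fun s t h =>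
    le_of_lt (by simpa [Real.dist_eq] using hδ0 (by simpa [Real.dist_eq] using h))
  refine ⟨δ / (|c| + 1), by positivity, fun {a b} hab => ?_⟩
  have hcb : |c| * |a - b| < δ := by
    have h1 : |a - b| < δ / (|c| + 1) := by simpa [Real.dist_eq] using hab
    have h2 : |c| * |a - b| ≤ |c| * (δ / (|c| + 1)) :=
      mul_le_mul_of_nonneg_left h1.le (abs_nonneg c)
    have h3 : |c| * (δ / (|c| + 1)) < δ := by
      rw [mul_div_assoc', div_lt_iff₀ (by positivity)]
      nlinarith [abs_nonneg c]
    linarith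
  have := est μ hφc hC hδ c d a b hcb
  rw [Real.dist_eq]
  linarith [hε]

/-- Continuity of `(B, x₁, x₂) ↦ K_B[x₁,x₂]` : if `Bₙ → B∞` weakly (as probability
measures on `[0,1]`) and `x₁ⁿ → x₁^∞`, `x₂ⁿ → x₂^∞` in `ℝ≥0`, then
`∫ φ dK_{Bₙ}[x₁ⁿ,x₂ⁿ] → ∫ φ dK_{B∞}[x₁^∞,x₂^∞]` for every continuous compactly
supported `φ`. -/
theorem stmt1 (B : ℕ → Measure ℝ) (Binf : Measure ℝ)
    [∀ n, IsProbabilityMeasure (B n)] [IsProbabilityMeasure Binf]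
    (hB : ∀ n, (B n) (Set.Icc (0:ℝ) 1)ᶜ = 0) (hBinf : Binf (Set.Icc (0:ℝ) 1)ᶜ = 0)
    (hweak : ∀ ψ : ℝ → ℝ, Continuous ψ →
      Tendsto (fun n => ∫ z, ψ z ∂(B n)) atTop (𝓝 (∫ z, ψ z ∂Binf)))
    (x₁ x₂ : ℕ → ℝ) (x₁inf x₂inf : ℝ)
    (hx₁0 : ∀ n, 0 ≤ x₁ n) (hx₂0 : ∀ n, 0 ≤ x₂ n)
    (hx₁ : Tendsto x₁ atTop (𝓝 x₁inf)) (hx₂ : Tendsto x₂ atTop (𝓝 x₂inf))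
    (φ : ℝ → ℝ) (hφc : Continuous φ) (hφs : HasCompactSupport φ) :
    Tendsto (fun n => ∫ x, φ x ∂(transferK (B n) (x₁ n) (x₂ n))) atTop
      (𝓝 (∫ x, φ x ∂(transferK Binf x₁inf x₂inf))) := by
  -- global bound and uniform continuity of φ
  obtain ⟨x0, hx0⟩ := (hφc.norm).exists_forall_ge_of_hasCompactSupport hφs.norm
  set C := ‖φ x0‖ with hCdef
  have hC : ∀ x, |φ x| ≤ C := fun x => by simpa [Real.norm_eq_abs] using hx0 x
  have hφu : UniformContinuous φ := hφs.uniformContinuous_of_continuous hφc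
  -- rewrite the pushforward integrals
  have hmapn : ∀ n, ∫ x, φ x ∂(transferK (B n) (x₁ n) (x₂ n))
      = ∫ p : ℝ × ℝ, φ (x₁ n * (1 - p.1) + x₂ n * p.2) ∂((B n).prod (B n)) := fun n =>
    integral_map (by fun_prop) hφc.aestronglyMeasurable
  have hmapinf : ∫ x, φ x ∂(transferK Binf x₁inf x₂inf)
      = ∫ p : ℝ × ℝ, φ (x₁inf * (1 - p.1) + x₂inf * p.2) ∂(Binf.prod Binf) :=
    integral_map (by fun_prop) hφc.aestronglyMeasurable
  -- integrability
  have hintn : ∀ n (c d : ℝ),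
      Integrable (fun p : ℝ × ℝ => φ (c * (1 - p.1) + d * p.2)) ((B n).prod (B n)) :=
    fun n c d => bdd_integrable _ (hφc.comp (by fun_prop)).aestronglyMeasurable (fun p => hC _)
  have hintinf : ∀ (c d : ℝ),
      Integrable (fun p : ℝ × ℝ => φ (c * (1 - p.1) + d * p.2)) (Binf.prod Binf) :=
    fun c d => bdd_integrable _ (hφc.comp (by fun_prop)).aestronglyMeasurable (fun p => hC _)
  -- a.e. support facts
  have haen : ∀ n, ∀ᵐ z ∂(B n), z ∈ Set.Icc (0:ℝ) 1 := fun n => mem_ae_iff.mpr (hB n)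
  have haeprod : ∀ n, ∀ᵐ p : ℝ × ℝ ∂((B n).prod (B n)),
      p.1 ∈ Set.Icc (0:ℝ) 1 ∧ p.2 ∈ Set.Icc (0:ℝ) 1 := by
    intro n
    have h0 : ((B n).prod (B n)) ((Set.Icc (0:ℝ) 1 ×ˢ Set.Icc (0:ℝ) 1)ᶜ) = 0 := by
      rw [Set.compl_prod_eq_union]
      apply measure_union_null <;> rw [Measure.prod_prod] <;> simp [hB n]
    have hae : ∀ᵐ p : ℝ × ℝ ∂((B n).prod (B n)), p ∈ Set.Icc (0:ℝ) 1 ×ˢ Set.Icc (0:ℝ) 1 :=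
      mem_ae_iff.mpr h0
    exact hae.mono fun p hp => ⟨hp.1, hp.2⟩
  -- the limit inner integral
  set G : ℝ → ℝ := fun t => ∫ z, φ (x₁inf * (1 - t) + x₂inf * z) ∂Binf with hGdef
  have hGcont : Continuous G := Hcont Binf hφc hφu hC x₁inf x₂inf
  have hGbd : ∀ t, |G t| ≤ C := fun t => abs_integral_le' Binf (ae_of_all _ fun z => hC _)
  have hIinf : ∫ p : ℝ × ℝ, φ (x₁inf * (1 - p.1) + x₂inf * p.2) ∂(Binf.prod Binf)
      = ∫ t, G t ∂Binf := integral_prod _ (hintinf _ _)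
  -- the inner integrals w.r.t. B n
  set H : ℕ → ℝ → ℝ := fun n t => ∫ z, φ (x₁inf * (1 - t) + x₂inf * z) ∂(B n) with hHdef
  have hJn : ∀ n, ∫ p : ℝ × ℝ, φ (x₁inf * (1 - p.1) + x₂inf * p.2) ∂((B n).prod (B n))
      = ∫ t, H n t ∂(B n) := fun n => integral_prod _ (hintn n _ _)
  have hHpt : ∀ t, Tendsto (fun n => H n t) atTop (𝓝 (G t)) := fun t =>
    hweak (fun z => φ (x₁inf * (1 - t) + x₂inf * z)) (hφc.comp (by continuity))
  have hHbd : ∀ n t, |H n t| ≤ C := fun n t =>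
    abs_integral_le' (B n) (ae_of_all _ fun z => hC _)
  have hHcont : ∀ n, Continuous (H n) := fun n => Hcont (B n) hφc hφu hC x₁inf x₂inf
  have hKlim : Tendsto (fun n => ∫ t, G t ∂(B n)) atTop (𝓝 (∫ t, G t ∂Binf)) :=
    hweak G hGcont
  simp only [hmapn, hmapinf, hIinf]
  rw [Metric.tendsto_nhds]
  intro ε hε
  have hε8 : 0 < ε / 8 := by positivity
  obtain ⟨δ, hδpos, hδ0⟩ := Metric.uniformContinuous_iff.mp hφu (ε / 8) hε8
  have hδ : ∀ s t : ℝ, |s - t| < δ → |φ s - φ t| ≤ ε / 8 := fun s t h =>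
    le_of_lt (by simpa [Real.dist_eq] using hδ0 (by simpa [Real.dist_eq] using h))
  -- First piece: parameters converge
  have hE1 : ∀ᶠ n in atTop,
      |(∫ p : ℝ × ℝ, φ (x₁ n * (1 - p.1) + x₂ n * p.2) ∂((B n).prod (B n)))
        - ∫ p : ℝ × ℝ, φ (x₁inf * (1 - p.1) + x₂inf * p.2) ∂((B n).prod (B n))| ≤ ε / 8 := by
    have h1 : ∀ᶠ n in atTop, |x₁ n - x₁inf| < δ / 2 :=
      hx₁.eventually (eventually_abs_sub_lt x₁inf (by positivity))
    have h2 : ∀ᶠ n in atTop, |x₂ n - x₂inf| < δ / 2 :=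
      hx₂.eventually (eventually_abs_sub_lt x₂inf (by positivity))
    filter_upwards [h1, h2] with n ha hb
    rw [← integral_sub (hintn n _ _) (hintn n _ _)]
    apply abs_integral_le'
    filter_upwards [haeprod n] with p hp
    apply hδ
    have harg : (x₁ n * (1 - p.1) + x₂ n * p.2) - (x₁inf * (1 - p.1) + x₂inf * p.2)
        = (x₁ n - x₁inf) * (1 - p.1) + (x₂ n - x₂inf) * p.2 := by ring
    have hb1 : |1 - p.1| ≤ 1 := abs_le.mpr ⟨by linarith [hp.1.1, hp.1.2], by linarith [hp.1.1]⟩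
    have hb2 : |p.2| ≤ 1 := abs_le.mpr ⟨by linarith [hp.2.1], hp.2.2⟩
    calc |(x₁ n * (1 - p.1) + x₂ n * p.2) - (x₁inf * (1 - p.1) + x₂inf * p.2)|
        = |(x₁ n - x₁inf) * (1 - p.1) + (x₂ n - x₂inf) * p.2| := by rw [harg]
      _ ≤ |(x₁ n - x₁inf) * (1 - p.1)| + |(x₂ n - x₂inf) * p.2| := abs_add_le _ _
      _ = |x₁ n - x₁inf| * |1 - p.1| + |x₂ n - x₂inf| * |p.2| := by rw [abs_mul, abs_mul]
      _ < δ := by nlinarith [abs_nonneg (x₁ n - x₁inf), abs_nonneg (x₂ n - x₂inf)]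
  -- equicontinuity
  set δ' : ℝ := δ / (|x₁inf| + 1) with hδ'def
  have hδ'pos : 0 < δ' := by positivity
  have hmul : ∀ t s : ℝ, |t - s| < δ' → |x₁inf| * |t - s| < δ := by
    intro t s hts
    have h2 : |x₁inf| * |t - s| ≤ |x₁inf| * δ' := mul_le_mul_of_nonneg_left hts.le (abs_nonneg _)
    have h3 : |x₁inf| * δ' < δ := by
      rw [hδ'def, mul_div_assoc', div_lt_iff₀ (by positivity)]
      nlinarith [abs_nonneg x₁inf]
    linarith
  have hequin : ∀ n t s, |t - s| < δ' → |H n t - H n s| ≤ ε / 8 := fun n t s hts =>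
    est (B n) hφc hC hδ x₁inf x₂inf t s (hmul t s hts)
  have hequiinf : ∀ t s, |t - s| < δ' → |G t - G s| ≤ ε / 8 := fun t s hts =>
    est Binf hφc hC hδ x₁inf x₂inf t s (hmul t s hts)
  -- finite net
  obtain ⟨S, hS⟩ := (isCompact_Icc (a := (0:ℝ)) (b := 1)).elim_finite_subcover
    (fun s : ℝ => Metric.ball s δ') (fun s => Metric.isOpen_ball)
    (fun x hx => Set.mem_iUnion.mpr ⟨x, Metric.mem_ball_self hδ'pos⟩)
  have hnet : ∀ᶠ n in atTop, ∀ s ∈ S, |H n s - G s| < ε / 8 := by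
    rw [eventually_all_finset]
    intro s _
    exact (hHpt s).eventually (eventually_abs_sub_lt (G s) hε8)
  -- Second piece: uniform convergence of inner integrals
  have hE2 : ∀ᶠ n in atTop,
      |(∫ t, H n t ∂(B n)) - ∫ t, G t ∂(B n)| ≤ 3 * (ε / 8) := by
    filter_upwards [hnet] with n hn
    have hHint : Integrable (H n) (B n) :=
      bdd_integrable _ (hHcont n).aestronglyMeasurable (hHbd n)
    have hGint : Integrable G (B n) := bdd_integrable _ hGcont.aestronglyMeasurable hGbd
    rw [← integral_sub hHint hGint]
    apply abs_integral_le'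
    filter_upwards [haen n] with t ht
    obtain ⟨s, hsS, hts⟩ : ∃ s ∈ S, t ∈ Metric.ball s δ' := by
      have := hS ht
      simpa [Set.mem_iUnion] using this
    have hts' : |t - s| < δ' := by simpa [Real.dist_eq] using hts
    have h1 := hequin n t s hts'
    have h2 := hn s hsS
    have h3 := hequiinf s t (by rw [abs_sub_comm]; exact hts')
    have t1 : |H n t - G t| ≤ |H n t - H n s| + |H n s - G t| := abs_sub_le _ _ _
    have t2 : |H n s - G t| ≤ |H n s - G s| + |G s - G t| := abs_sub_le _ _ _
    linarith
  -- Third piece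
  have hE3 : ∀ᶠ n in atTop, |(∫ t, G t ∂(B n)) - ∫ t, G t ∂Binf| < ε / 8 :=
    hKlim.eventually (eventually_abs_sub_lt _ hε8)
  filter_upwards [hE1, hE2, hE3] with n h1 h2 h3
  rw [Real.dist_eq]
  have hJ := hJn n
  have t1 : |(∫ p : ℝ × ℝ, φ (x₁ n * (1 - p.1) + x₂ n * p.2) ∂((B n).prod (B n)))
      - ∫ t, G t ∂Binf|
      ≤ |(∫ p : ℝ × ℝ, φ (x₁ n * (1 - p.1) + x₂ n * p.2) ∂((B n).prod (B n)))
        - ∫ p : ℝ × ℝ, φ (x₁inf * (1 - p.1) + x₂inf * p.2) ∂((B n).prod (B n))|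
        + |(∫ p : ℝ × ℝ, φ (x₁inf * (1 - p.1) + x₂inf * p.2) ∂((B n).prod (B n)))
          - ∫ t, G t ∂Binf| := abs_sub_le _ _ _
  have t2 : |(∫ p : ℝ × ℝ, φ (x₁inf * (1 - p.1) + x₂inf * p.2) ∂((B n).prod (B n)))
      - ∫ t, G t ∂Binf|
      ≤ |(∫ t, H n t ∂(B n)) - ∫ t, G t ∂(B n)|
        + |(∫ t, G t ∂(B n)) - ∫ t, G t ∂Binf| := by
    rw [hJ]; exact abs_sub_le _ _ _
  linarith
end

section
/- Let B be a Borel probability measure on [0,1] that is absolutely continuous with respect to Lebesgue measure, with density B̃ ∈ L¹([0,1]), extended by zero to a function on ℝ≥0. Then for all x₁ > 0 and x₂ > 0, the measure K_B[x₁,x₂] is absolutely continuous with respect to Lebesgue measure on ℝ≥0, with density x ↦ (1/(x₁x₂)) ∫₀^∞ B̃((x − x₁ + w)/x₂) · B̃(w/x₁) dw. -/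
open MeasureTheory Filter Topology

/-!
`K_B[x₁,x₂]` is the translate by `x₁` of the convolution of the images of `B` under
`z ↦ -x₁ z` and `z ↦ x₂ z`. A linear image of an absolutely continuous measure has the rescaled
density, a convolution of two densities is the density of the convolution (Tonelli and
translation invariance of Lebesgue measure), and a translate has the shifted density; the
substitution `w ↦ -w` then gives the stated formula. To replace the `ℝ≥0∞`-valued integral by
the Bochner integral, the integrand must be integrable for a.e. `x`: this holds because
`(x, w) ↦ F (x + w) H w` is integrable on the product when `F` and `H` are integrable.
-/

open Measure
open scoped ENNReal

theorem MeasureTheory.MeasurePreserving.map_withDensity {α β : Type*} [MeasurableSpace α]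
    [MeasurableSpace β] {μ : Measure α} {ν : Measure β} (e : α ≃ᵐ β) (he : MeasurePreserving e μ ν)
    (f : α → ℝ≥0∞) : map e (μ.withDensity f) = ν.withDensity (f ∘ e.symm) := by
  ext s hs
  rw [map_apply e.measurable hs, withDensity_apply _ hs, withDensity_apply _ (e.measurable hs),
    ← he.setLIntegral_comp_preimage_emb e.measurableEmbedding]
  simp

theorem map_add_left_withDensity {G : Type*} [MeasurableSpace G] [AddGroup G] [MeasurableAdd G]
    (μ : Measure G) [μ.IsAddLeftInvariant] (f : G → ℝ≥0∞) (c : G) :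
    map (c + ·) (μ.withDensity f) = μ.withDensity (fun x => f (-c + x)) :=
  (measurePreserving_add_left μ c).map_withDensity (MeasurableEquiv.addLeft c) f

theorem Real.map_mul_left_withDensity {c : ℝ} (hc : c ≠ 0) (f : ℝ → ℝ≥0∞) :
    map (c * ·) (volume.withDensity f) =
      ENNReal.ofReal |c⁻¹| • volume.withDensity (fun x => f (x / c)) := by
  have he : MeasurePreserving (MeasurableEquiv.mulLeft₀ c hc) volume
      (ENNReal.ofReal |c⁻¹| • volume) :=
    ⟨measurable_const_mul c, Real.map_volume_mul_left hc⟩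
  rw [← withDensity_smul_measure]
  exact (he.map_withDensity _ f).trans (by congr 1; ext x; simp [div_eq_inv_mul])

theorem AEMeasurable.comp_div_const {β : Type*} [MeasurableSpace β] {f : ℝ → β}
    (hf : AEMeasurable f) {c : ℝ} (hc : c ≠ 0) : AEMeasurable (fun x => f (x / c)) := by
  simp_rw [div_eq_inv_mul]
  exact hf.comp_quasiMeasurePreserving (quasiMeasurePreserving_smul volume (inv_ne_zero hc))

theorem withDensity_conv_withDensity {G : Type*} [MeasurableSpace G] [AddGroup G]
    [MeasurableAdd₂ G] [MeasurableNeg G] (μ : Measure G) [SFinite μ] [μ.IsAddLeftInvariant]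
    {f g : G → ℝ≥0∞} (hf : AEMeasurable f μ) (hg : AEMeasurable g μ) :
    μ.withDensity f ∗ μ.withDensity g = μ.withDensity (fun z => ∫⁻ x, f x * g (-x + z) ∂μ) := by
  ext s hs
  have hind : Measurable (s.indicator (1 : G → ℝ≥0∞)) := measurable_one.indicator hs
  have hswap : AEMeasurable (Function.uncurry fun x z => f x * (g (-x + z) * s.indicator 1 z))
      (μ.prod μ) :=
    (hf.comp_quasiMeasurePreserving quasiMeasurePreserving_fst).mul
      ((hg.comp_quasiMeasurePreserving (quasiMeasurePreserving_neg_add μ μ)).mul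
        (hind.comp measurable_snd).aemeasurable)
  have hsection : Measurable fun x => ∫⁻ y, s.indicator 1 (x + y) ∂μ.withDensity g :=
    (hind.comp measurable_add).lintegral_prod_right'
  calc (μ.withDensity f ∗ μ.withDensity g) s
      = ∫⁻ x, f x * ∫⁻ y, g y * s.indicator 1 (x + y) ∂μ ∂μ := by
        rw [← lintegral_indicator_one hs, lintegral_conv hind,
          lintegral_withDensity_eq_lintegral_mul₀ hf hsection.aemeasurable]
        congr with x
        rw [Pi.mul_apply, lintegral_withDensity_eq_lintegral_mul₀ hg
          (show Measurable fun y => s.indicator 1 (x + y) from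
            hind.comp (measurable_const_add x)).aemeasurable]
        rfl
    _ = ∫⁻ x, ∫⁻ z, f x * (g (-x + z) * s.indicator 1 z) ∂μ ∂μ := by
        congr with x
        have hmeas : AEMeasurable (fun z => g (-x + z) * s.indicator 1 z) μ :=
          (hg.comp_quasiMeasurePreserving
            (measurePreserving_add_left μ (-x)).quasiMeasurePreserving).mul hind.aemeasurable
        rw [lintegral_const_mul'' _ hmeas,
          ← lintegral_add_left_eq_self (fun z => g (-x + z) * s.indicator 1 z) x]
        simp only [neg_add_cancel_left]
    _ = ∫⁻ z in s, ∫⁻ x, f x * g (-x + z) ∂μ ∂μ := by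
        rw [lintegral_lintegral_swap hswap, ← lintegral_indicator hs]
        congr with z
        by_cases hz : z ∈ s <;> simp [hz]
    _ = _ := (withDensity_apply _ hs).symm

theorem transferK_eq_map_conv (B : Measure ℝ) [SFinite B] (x₁ x₂ : ℝ) :
    transferK B x₁ x₂ = map (x₁ + ·) (map ((-x₁) * ·) B ∗ map (x₂ * ·) B) := by
  rw [transferK, Measure.conv, map_prod_map _ _ (by fun_prop) (by fun_prop),
    map_map (by fun_prop) (by fun_prop), map_map (by fun_prop) (by fun_prop)]
  congr 1
  ext p
  simp only [Function.comp_apply, Prod.map_fst, Prod.map_snd]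
  ring

theorem transferK_withDensity {f : ℝ → ℝ≥0∞} (hf : AEMeasurable f) {x₁ x₂ : ℝ} (hx₁ : x₁ ≠ 0)
    (hx₂ : x₂ ≠ 0) :
    transferK (volume.withDensity f) x₁ x₂ = ENNReal.ofReal |(x₁ * x₂)⁻¹| •
      volume.withDensity (fun x => ∫⁻ w, f ((x - x₁ + w) / x₂) * f (w / x₁)) := by
  rw [transferK_eq_map_conv, Real.map_mul_left_withDensity (neg_ne_zero.2 hx₁),
    Real.map_mul_left_withDensity hx₂, conv_smul_left, conv_smul_right,
    withDensity_conv_withDensity _ (hf.comp_div_const (neg_ne_zero.2 hx₁))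
      (hf.comp_div_const hx₂), Measure.map_smul, Measure.map_smul, map_add_left_withDensity,
    smul_smul, ← ENNReal.ofReal_mul (abs_nonneg _), ← abs_mul, inv_neg, neg_mul, abs_neg, ← mul_inv]
  congr 2
  ext x
  rw [← lintegral_neg_eq_self]
  congr with w
  rw [neg_div_neg_eq, mul_comm]
  congr 3
  ring

theorem ae_integrable_mul_comp_add {G 𝕜 : Type*} [MeasurableSpace G] [AddGroup G]
    [MeasurableAdd₂ G] {μ : Measure G} [SFinite μ] [μ.IsAddRightInvariant] [NormedRing 𝕜]
    {F H : G → 𝕜} (hF : Integrable F μ) (hH : Integrable H μ) :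
    ∀ᵐ x ∂μ, Integrable (fun w => F (x + w) * H w) μ :=
  (((measurePreserving_add_prod μ μ).integrable_comp
    (hF.mul_prod hH).aestronglyMeasurable).2 (hF.mul_prod hH)).prod_right_ae

theorem stmt2_general (Bt : ℝ → ℝ) (hBt_int : Integrable Bt)
    (hBt_nonneg : ∀ z, 0 ≤ Bt z) (hBt_supp : ∀ z, z ∉ Set.Icc (0:ℝ) 1 → Bt z = 0)
    (B : Measure ℝ)
    (hB : B = volume.withDensity (fun z => ENNReal.ofReal (Bt z)))
    (x₁ x₂ : ℝ) (hx₁ : 0 < x₁) (hx₂ : 0 < x₂) :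
    transferK B x₁ x₂ =
      volume.withDensity (fun x => ENNReal.ofReal
        ((1 / (x₁ * x₂)) * ∫ w in Set.Ioi (0:ℝ), Bt ((x - x₁ + w) / x₂) * Bt (w / x₁))) := by
  have hc : 0 ≤ 1 / (x₁ * x₂) := by positivity
  have hsections : ∀ᵐ x, Integrable (fun w => Bt ((x - x₁ + w) / x₂) * Bt (w / x₁)) := by
    filter_upwards [ae_integrable_mul_comp_add ((hBt_int.comp_div hx₂.ne').comp_sub_right x₁)
      (hBt_int.comp_div hx₁.ne')] with x hx
    simpa only [add_sub_right_comm] using hx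
  simp_rw [ENNReal.ofReal_mul hc]
  rw [hB, transferK_withDensity hBt_int.aemeasurable.ennreal_ofReal hx₁.ne' hx₂.ne',
    ← withDensity_smul' _ _ ENNReal.ofReal_ne_top, abs_of_nonneg (by positivity), ← one_div]
  refine withDensity_congr_ae ?_
  filter_upwards [hsections] with x hx
  have hsupp : ∀ w ∉ Set.Ici (0 : ℝ), Bt ((x - x₁ + w) / x₂) * Bt (w / x₁) = 0 := fun w hw => by
    have hneg : w / x₁ < 0 := div_neg_of_neg_of_pos (Set.notMem_Ici.1 hw) hx₁
    rw [hBt_supp (w / x₁) fun h => hneg.not_ge h.1, mul_zero]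
  simp only [Pi.smul_apply, smul_eq_mul]
  rw [← integral_Ici_eq_integral_Ioi, setIntegral_eq_integral_of_forall_compl_eq_zero hsupp,
    ofReal_integral_eq_lintegral_ofReal hx
      (ae_of_all _ fun w => mul_nonneg (hBt_nonneg _) (hBt_nonneg _))]
  simp_rw [ENNReal.ofReal_mul (hBt_nonneg _)]

/-- If `B` has density `B̃ ∈ L¹([0,1])` with respect to Lebesgue measure (extended by
zero outside `[0,1]`), then for `x₁, x₂ > 0` the measure `K_B[x₁,x₂]` is absolutely
continuous with respect to Lebesgue measure, with density
`x ↦ (1/(x₁ x₂)) ∫₀^∞ B̃((x - x₁ + w)/x₂) B̃(w/x₁) dw`. -/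
theorem stmt2 (Bt : ℝ → ℝ) (hBt_int : Integrable Bt)
    (hBt_nonneg : ∀ z, 0 ≤ Bt z) (hBt_supp : ∀ z, z ∉ Set.Icc (0:ℝ) 1 → Bt z = 0)
    (B : Measure ℝ) [IsProbabilityMeasure B]
    (hB : B = volume.withDensity (fun z => ENNReal.ofReal (Bt z)))
    (x₁ x₂ : ℝ) (hx₁ : 0 < x₁) (hx₂ : 0 < x₂) :
    transferK B x₁ x₂ =
      volume.withDensity (fun x => ENNReal.ofReal
        ((1 / (x₁ * x₂)) * ∫ w in Set.Ioi (0:ℝ), Bt ((x - x₁ + w) / x₂) * Bt (w / x₁))) :=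
  stmt2_general Bt hBt_int hBt_nonneg hBt_supp B hB x₁ x₂ hx₁ hx₂
end

section
/- Let (Bₙ)ₙ be Borel probability measures on [0,1] converging weakly to a probability measure B∞ (∫ ψ dBₙ → ∫ ψ dB∞ for every continuous ψ on [0,1]), and let (uₙ)ₙ, (vₙ)ₙ be finite nonnegative Borel measures on ℝ≥0 converging weakly to finite nonnegative measures u∞, v∞ respectively (∫ φ duₙ → ∫ φ du∞ and ∫ φ dvₙ → ∫ φ dv∞ for every bounded continuous φ on ℝ≥0). Then for every continuous compactly supported φ : ℝ≥0 → ℝ, ∫ φ d(T_{Bₙ}[uₙ, vₙ]) → ∫ φ d(T_{B∞}[u∞, v∞]) as n → ∞. -/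
/-!
Weak convergence of finite measures is preserved by products (normalize to probability
measures, whose product is weakly continuous; if a limit is zero, the total masses tend to
zero) and by pushforward along the continuous map `(z₁, z₂, x₁, x₂) ↦ x₁ (1 - z₁) + x₂ z₂`.
A continuous compactly supported `φ` is a bounded continuous test function.
-/

open MeasureTheory Filter Topology

/-- The transfer operator `T_B[u,v]`: the pushforward of `B ⊗ B ⊗ u ⊗ v` under
`(z₁, z₂, x₁, x₂) ↦ x₁ (1 - z₁) + x₂ z₂`. -/
noncomputable def transferT (B u v : Measure ℝ) : Measure ℝ :=
  Measure.map (fun q : (ℝ × ℝ) × ℝ × ℝ => q.2.1 * (1 - q.1.1) + q.2.2 * q.1.2)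
    ((B.prod B).prod (u.prod v))

namespace MeasureTheory.FiniteMeasure

variable {α β : Type*} [MeasurableSpace α] [MeasurableSpace β]

lemma nonempty_of_ne_zero {μ : FiniteMeasure α} (h : μ ≠ 0) : Nonempty α :=
  ⟨(nonempty_of_measure_ne_zero (μ := (μ : Measure α)) (s := Set.univ)
    (by rw [← ennreal_mass]; exact_mod_cast (mass_nonzero_iff μ).2 h)).some⟩

lemma prod_eq_mass_smul_normalize_prod [Nonempty α] [Nonempty β]
    (μ : FiniteMeasure α) (ν : FiniteMeasure β) :
    μ.prod ν = (μ.mass * ν.mass) • (μ.normalize.prod ν.normalize).toFiniteMeasure := by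
  conv_lhs => rw [μ.self_eq_mass_smul_normalize, ν.self_eq_mass_smul_normalize]
  ext s hs
  simp [Measure.prod_smul_left, Measure.prod_smul_right, smul_smul, mul_comm]

variable [TopologicalSpace α] [TopologicalSpace β] [SecondCountableTopology α]
  [SecondCountableTopology β] [TopologicalSpace.PseudoMetrizableSpace α]
  [TopologicalSpace.PseudoMetrizableSpace β] [OpensMeasurableSpace α] [OpensMeasurableSpace β]

theorem tendsto_prod {ι : Type*} {L : Filter ι} {μs : ι → FiniteMeasure α}
    {νs : ι → FiniteMeasure β} {μ : FiniteMeasure α} {ν : FiniteMeasure β}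
    (hμ : Tendsto μs L (𝓝 μ)) (hν : Tendsto νs L (𝓝 ν)) :
    Tendsto (fun i ↦ (μs i).prod (νs i)) L (𝓝 (μ.prod ν)) := by
  have hmass : Tendsto (fun i ↦ (μs i).mass * (νs i).mass) L (𝓝 (μ.mass * ν.mass)) :=
    hμ.mass.mul hν.mass
  by_cases h : μ.mass * ν.mass = 0
  · have hzero : μ.prod ν = 0 := by rw [← mass_zero_iff, mass_prod, h]
    rw [hzero]
    exact tendsto_zero_of_tendsto_zero_mass (by simpa [h] using hmass)
  obtain ⟨hμ0, hν0⟩ : μ ≠ 0 ∧ ν ≠ 0 := by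
    simpa only [mul_ne_zero_iff, mass_nonzero_iff] using h
  have := nonempty_of_ne_zero hμ0
  have := nonempty_of_ne_zero hν0
  simp_rw [prod_eq_mass_smul_normalize_prod]
  refine hmass.smul (ProbabilityMeasure.toFiniteMeasure_continuous.tendsto _ |>.comp ?_)
  exact (ProbabilityMeasure.continuous_prod.tendsto _).comp
    ((tendsto_normalize_of_tendsto hμ hμ0).prodMk_nhds (tendsto_normalize_of_tendsto hν hν0))

lemma tendsto_mk_of_forall_integral_tendsto {Ω ι : Type*}
    [MeasurableSpace Ω] [TopologicalSpace Ω] [OpensMeasurableSpace Ω] {L : Filter ι}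
    (μs : ι → Measure Ω) [∀ i, IsFiniteMeasure (μs i)] (μ : Measure Ω) [IsFiniteMeasure μ]
    (h : ∀ f : Ω → ℝ, Continuous f → (∃ C, ∀ x, |f x| ≤ C) →
      Tendsto (fun i ↦ ∫ x, f x ∂(μs i)) L (𝓝 (∫ x, f x ∂μ))) :
    Tendsto (β := FiniteMeasure Ω) (fun i ↦ ⟨μs i, inferInstance⟩) L (𝓝 ⟨μ, inferInstance⟩) :=
  tendsto_iff_forall_integral_tendsto.2 fun f ↦
    h f f.continuous ⟨‖f‖, fun x ↦ f.norm_coe_le_norm x⟩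

end MeasureTheory.FiniteMeasure

theorem stmt3_general (B : ℕ → Measure ℝ) (Binf : Measure ℝ)
    [∀ n, IsProbabilityMeasure (B n)] [IsProbabilityMeasure Binf]
    (hBweak : ∀ ψ : ℝ → ℝ, Continuous ψ →
      Tendsto (fun n => ∫ z, ψ z ∂(B n)) atTop (𝓝 (∫ z, ψ z ∂Binf)))
    (u v : ℕ → Measure ℝ) (uinf vinf : Measure ℝ)
    [∀ n, IsFiniteMeasure (u n)] [∀ n, IsFiniteMeasure (v n)]
    [IsFiniteMeasure uinf] [IsFiniteMeasure vinf]
    (huweak : ∀ φ : ℝ → ℝ, Continuous φ → (∃ C, ∀ x, |φ x| ≤ C) →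
      Tendsto (fun n => ∫ x, φ x ∂(u n)) atTop (𝓝 (∫ x, φ x ∂uinf)))
    (hvweak : ∀ φ : ℝ → ℝ, Continuous φ → (∃ C, ∀ x, |φ x| ≤ C) →
      Tendsto (fun n => ∫ x, φ x ∂(v n)) atTop (𝓝 (∫ x, φ x ∂vinf)))
    (φ : ℝ → ℝ) (hφc : Continuous φ) (hφs : HasCompactSupport φ) :
    Tendsto (fun n => ∫ x, φ x ∂(transferT (B n) (u n) (v n))) atTop
      (𝓝 (∫ x, φ x ∂(transferT Binf uinf vinf))) := by
  have hB := FiniteMeasure.tendsto_mk_of_forall_integral_tendsto B Binf fun ψ hψ _ ↦ hBweak ψ hψ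
  have hu := FiniteMeasure.tendsto_mk_of_forall_integral_tendsto u uinf huweak
  have hv := FiniteMeasure.tendsto_mk_of_forall_integral_tendsto v vinf hvweak
  have hT : Continuous fun q : (ℝ × ℝ) × ℝ × ℝ ↦ q.2.1 * (1 - q.1.1) + q.2.2 * q.1.2 := by
    fun_prop
  have hmap := FiniteMeasure.tendsto_map_of_tendsto_of_continuous _ _
    (FiniteMeasure.tendsto_prod (FiniteMeasure.tendsto_prod hB hB)
      (FiniteMeasure.tendsto_prod hu hv)) hT
  exact FiniteMeasure.tendsto_iff_forall_integral_tendsto.1 hmap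
    (⟨⟨φ, hφc⟩, hφs⟩ : CompactlySupportedContinuousMap ℝ ℝ).toBoundedContinuousFunction

/-- Continuity of `(B, u, v) ↦ T_B[u,v]` for the weak topologies: if `Bₙ → B∞` weakly
(probability measures on `[0,1]`), and `uₙ → u∞`, `vₙ → v∞` weakly (finite nonnegative
measures on `ℝ≥0`, tested against bounded continuous functions), then
`∫ φ dT_{Bₙ}[uₙ,vₙ] → ∫ φ dT_{B∞}[u∞,v∞]` for every continuous compactly supported `φ`. -/
theorem stmt3 (B : ℕ → Measure ℝ) (Binf : Measure ℝ)
    [∀ n, IsProbabilityMeasure (B n)] [IsProbabilityMeasure Binf]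
    (hB : ∀ n, (B n) (Set.Icc (0:ℝ) 1)ᶜ = 0) (hBinf : Binf (Set.Icc (0:ℝ) 1)ᶜ = 0)
    (hBweak : ∀ ψ : ℝ → ℝ, Continuous ψ →
      Tendsto (fun n => ∫ z, ψ z ∂(B n)) atTop (𝓝 (∫ z, ψ z ∂Binf)))
    (u v : ℕ → Measure ℝ) (uinf vinf : Measure ℝ)
    [∀ n, IsFiniteMeasure (u n)] [∀ n, IsFiniteMeasure (v n)]
    [IsFiniteMeasure uinf] [IsFiniteMeasure vinf]
    (hu : ∀ n, (u n) (Set.Iio (0:ℝ)) = 0) (hv : ∀ n, (v n) (Set.Iio (0:ℝ)) = 0)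
    (huinf : uinf (Set.Iio (0:ℝ)) = 0) (hvinf : vinf (Set.Iio (0:ℝ)) = 0)
    (huweak : ∀ φ : ℝ → ℝ, Continuous φ → (∃ C, ∀ x, |φ x| ≤ C) →
      Tendsto (fun n => ∫ x, φ x ∂(u n)) atTop (𝓝 (∫ x, φ x ∂uinf)))
    (hvweak : ∀ φ : ℝ → ℝ, Continuous φ → (∃ C, ∀ x, |φ x| ≤ C) →
      Tendsto (fun n => ∫ x, φ x ∂(v n)) atTop (𝓝 (∫ x, φ x ∂vinf)))
    (φ : ℝ → ℝ) (hφc : Continuous φ) (hφs : HasCompactSupport φ) :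
    Tendsto (fun n => ∫ x, φ x ∂(transferT (B n) (u n) (v n))) atTop
      (𝓝 (∫ x, φ x ∂(transferT Binf uinf vinf))) :=
  stmt3_general B Binf hBweak u v uinf vinf huweak hvweak φ hφc hφs
end

section
/- Let B be a Borel probability measure on [0,1] and let u, v be nonnegative Borel measures on ℝ≥0 with finite second moments. Then ∫ x² d(T_B[u,v])(x) = (1 − 2λ₁,B + λ₂,B) · v(ℝ≥0) · ∫ x² du(x) + λ₂,B · u(ℝ≥0) · ∫ x² dv(x) + 2(1 − λ₁,B)λ₁,B · (∫ x du(x)) · (∫ x dv(x)), where λ₁,B = ∫₀¹ z dB(z) and λ₂,B = ∫₀¹ z² dB(z). -/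
/-!
Expanding the square, `(x₁(1 - z₁) + x₂z₂)² = (1 - z₁)²x₁² + z₂²x₂² + 2(1 - z₁)z₂ · x₁x₂`, and each
summand is a function of `(z₁, z₂)` times a function of `(x₁, x₂)`. By Fubini each integral then
factors into one-dimensional moments, a variable that does not occur contributing the total mass of
its measure. The moment hypotheses make every summand integrable; `B` lives on `[0, 1]`, so it has
moments of all orders.
-/

open MeasureTheory Filter Topology

open Set

section
variable {μ : Measure ℝ}

lemma integrable_of_norm_le_one_add_sq (hμ : ∫⁻ x, ENNReal.ofReal (1 + x ^ 2) ∂μ ≠ ⊤)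
    {g : ℝ → ℝ} (hg : AEStronglyMeasurable g μ) (hle : ∀ x, ‖g x‖ ≤ 1 + x ^ 2) :
    Integrable g μ :=
  ((lintegral_ofReal_ne_top_iff_integrable (by fun_prop) (ae_of_all _ fun x => by positivity)).1
    hμ).mono' hg (ae_of_all _ hle)

lemma isFiniteMeasure_of_lintegral_one_add_sq_ne_top
    (hμ : ∫⁻ x, ENNReal.ofReal (1 + x ^ 2) ∂μ ≠ ⊤) : IsFiniteMeasure μ :=
  (integrable_const_iff_isFiniteMeasure one_ne_zero).1 <|
    integrable_of_norm_le_one_add_sq hμ aestronglyMeasurable_const fun x => by simp; positivity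

lemma memLp_id_two_of_lintegral_one_add_sq_ne_top
    (hμ : ∫⁻ x, ENNReal.ofReal (1 + x ^ 2) ∂μ ≠ ⊤) : MemLp id 2 μ :=
  (memLp_two_iff_integrable_sq aestronglyMeasurable_id).2 <|
    integrable_of_norm_le_one_add_sq hμ (by fun_prop) fun x => by simp

lemma memLp_id_of_ae_mem_Icc [IsFiniteMeasure μ] {a b : ℝ} (h : ∀ᵐ x ∂μ, x ∈ Icc a b)
    (p : ENNReal) : MemLp id p μ :=
  .of_bound aestronglyMeasurable_id (max |a| |b|) (h.mono fun _ hx => abs_le_max_abs_abs hx.1 hx.2)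

variable [IsProbabilityMeasure μ]

lemma integral_one_sub (hμ : Integrable id μ) : ∫ z, (1 - z) ∂μ = 1 - ∫ z, z ∂μ := by
  rw [integral_sub (integrable_const 1) (g := fun z => z) hμ, integral_const, probReal_univ,
    one_smul]

lemma integral_one_sub_sq (hμ : MemLp id 2 μ) :
    ∫ z, (1 - z) ^ 2 ∂μ = 1 - 2 * ∫ z, z ∂μ + ∫ z, z ^ 2 ∂μ := by
  have hid : Integrable (fun z => z) μ := hμ.integrable one_le_two
  have hid2 : Integrable (fun z => z ^ 2) μ := hμ.integrable_sq
  have hlin : Integrable (fun z => 1 - 2 * z) μ := (integrable_const 1).sub (hid.const_mul 2)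
  simp_rw [sub_sq, one_pow, mul_one]
  rw [integral_add hlin hid2,
    integral_sub (integrable_const 1) (hid.const_mul 2), integral_const, integral_const_mul,
    probReal_univ, one_smul]
end

section
variable {B u v : Measure ℝ} [IsProbabilityMeasure B] [IsFiniteMeasure u] [IsFiniteMeasure v]

lemma integral_sq_transferT (hB : MemLp id 2 B) (hu : MemLp id 2 u) (hv : MemLp id 2 v) :
    ∫ x, x ^ 2 ∂transferT B u v =
      (∫ z, (1 - z) ^ 2 ∂B) * v.real univ * ∫ x, x ^ 2 ∂u
        + (∫ z, z ^ 2 ∂B) * u.real univ * ∫ x, x ^ 2 ∂v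
        + 2 * (∫ z, (1 - z) ∂B) * (∫ z, z ∂B) * ((∫ x, x ∂u) * ∫ x, x ∂v) := by
  have hB' : MemLp (fun z => 1 - z) 2 B := (memLp_const 1).sub hB
  have h₁ : Integrable (fun q : (ℝ × ℝ) × ℝ × ℝ => (1 - q.1.1) ^ 2 * q.2.1 ^ 2)
      ((B.prod B).prod (u.prod v)) :=
    (hB'.integrable_sq.comp_fst B).mul_prod (hu.integrable_sq.comp_fst v)
  have h₂ : Integrable (fun q : (ℝ × ℝ) × ℝ × ℝ => q.1.2 ^ 2 * q.2.2 ^ 2)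
      ((B.prod B).prod (u.prod v)) :=
    (hB.integrable_sq.comp_snd B).mul_prod (hv.integrable_sq.comp_snd u)
  have h₃ : Integrable (fun q : (ℝ × ℝ) × ℝ × ℝ => 2 * ((1 - q.1.1) * q.1.2) * (q.2.1 * q.2.2))
      ((B.prod B).prod (u.prod v)) :=
    (((hB'.integrable one_le_two).mul_prod (hB.integrable one_le_two)).const_mul 2).mul_prod
      ((hu.integrable one_le_two).mul_prod (hv.integrable one_le_two))
  have h₁₂ : Integrable
      (fun q : (ℝ × ℝ) × ℝ × ℝ => (1 - q.1.1) ^ 2 * q.2.1 ^ 2 + q.1.2 ^ 2 * q.2.2 ^ 2)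
      ((B.prod B).prod (u.prod v)) :=
    h₁.add h₂
  have hexpand : ∀ q : (ℝ × ℝ) × ℝ × ℝ, (q.2.1 * (1 - q.1.1) + q.2.2 * q.1.2) ^ 2 =
      (1 - q.1.1) ^ 2 * q.2.1 ^ 2 + q.1.2 ^ 2 * q.2.2 ^ 2
        + 2 * ((1 - q.1.1) * q.1.2) * (q.2.1 * q.2.2) := fun q => by ring
  rw [transferT, integral_map (by fun_prop) (by fun_prop)]
  simp_rw [hexpand]
  rw [integral_add h₁₂ h₃, integral_add h₁ h₂,
    integral_prod_mul (fun z : ℝ × ℝ => (1 - z.1) ^ 2) (fun x : ℝ × ℝ => x.1 ^ 2),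
    integral_prod_mul (fun z : ℝ × ℝ => z.2 ^ 2) (fun x : ℝ × ℝ => x.2 ^ 2),
    integral_prod_mul (fun z : ℝ × ℝ => 2 * ((1 - z.1) * z.2)) (fun x : ℝ × ℝ => x.1 * x.2),
    integral_const_mul, integral_prod_mul (fun z : ℝ => 1 - z) (fun z : ℝ => z),
    integral_prod_mul (fun x : ℝ => x) (fun x : ℝ => x),
    integral_fun_fst (fun z : ℝ => (1 - z) ^ 2), integral_fun_fst (fun x : ℝ => x ^ 2),
    integral_fun_snd (fun z : ℝ => z ^ 2), integral_fun_snd (fun x : ℝ => x ^ 2)]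
  simp only [probReal_univ, smul_eq_mul]
  ring
end

theorem stmt6_general (B : Measure ℝ) [IsProbabilityMeasure B] (hB : B (Set.Icc (0:ℝ) 1)ᶜ = 0)
    (u v : Measure ℝ)
    (hu2 : ∫⁻ x, ENNReal.ofReal (1 + x ^ 2) ∂u ≠ ⊤)
    (hv2 : ∫⁻ x, ENNReal.ofReal (1 + x ^ 2) ∂v ≠ ⊤) :
    ∫ x, x ^ 2 ∂(transferT B u v) =
      (1 - 2 * (∫ z, z ∂B) + ∫ z, z ^ 2 ∂B) * (v Set.univ).toReal * ∫ x, x ^ 2 ∂u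
        + (∫ z, z ^ 2 ∂B) * (u Set.univ).toReal * ∫ x, x ^ 2 ∂v
        + 2 * (1 - ∫ z, z ∂B) * (∫ z, z ∂B) * ((∫ x, x ∂u) * (∫ x, x ∂v)) := by
  have := isFiniteMeasure_of_lintegral_one_add_sq_ne_top hu2
  have := isFiniteMeasure_of_lintegral_one_add_sq_ne_top hv2
  have hB₂ : MemLp id 2 B := memLp_id_of_ae_mem_Icc (mem_ae_iff.2 hB) 2
  rw [integral_sq_transferT hB₂ (memLp_id_two_of_lintegral_one_add_sq_ne_top hu2)
    (memLp_id_two_of_lintegral_one_add_sq_ne_top hv2), integral_one_sub_sq hB₂,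
    integral_one_sub (hB₂.integrable one_le_two)]
  rfl

/-- Second moment of `T_B[u,v]`, for `u, v` nonnegative measures on `ℝ≥0` with finite
second moments: with `λ₁ = ∫ z dB(z)` and `λ₂ = ∫ z² dB(z)`,
`∫ x² dT_B[u,v] = (1 - 2λ₁ + λ₂) v(ℝ≥0) ∫ x² du + λ₂ u(ℝ≥0) ∫ x² dv
  + 2 (1-λ₁) λ₁ (∫ x du)(∫ x dv)`. -/
theorem stmt6 (B : Measure ℝ) [IsProbabilityMeasure B] (hB : B (Set.Icc (0:ℝ) 1)ᶜ = 0)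
    (u v : Measure ℝ) (hu0 : u (Set.Iio (0:ℝ)) = 0) (hv0 : v (Set.Iio (0:ℝ)) = 0)
    (hu2 : ∫⁻ x, ENNReal.ofReal (1 + x ^ 2) ∂u ≠ ⊤)
    (hv2 : ∫⁻ x, ENNReal.ofReal (1 + x ^ 2) ∂v ≠ ⊤) :
    ∫ x, x ^ 2 ∂(transferT B u v) =
      (1 - 2 * (∫ z, z ∂B) + ∫ z, z ^ 2 ∂B) * (v Set.univ).toReal * ∫ x, x ^ 2 ∂u
        + (∫ z, z ^ 2 ∂B) * (u Set.univ).toReal * ∫ x, x ^ 2 ∂v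
        + 2 * (1 - ∫ z, z ∂B) * (∫ z, z ∂B) * ((∫ x, x ∂u) * (∫ x, x ∂v)) :=
  stmt6_general B hB u v hu2 hv2
end

section
/- Let B be a Borel probability measure on [0,1] and let α > 0 be such that B ≥ α(δ₀ + δ₁) as measures on [0,1]. If ū is a Borel probability measure on ℝ≥0 with finite second moment satisfying T_B[ū, ū] = ū, then ū ≥ α² δ₀ as measures on ℝ≥0; in particular ū({0}) ≥ α². -/
open MeasureTheory Filter Topology

/-- If `B ≥ α (δ₀ + δ₁)` for some `α > 0` and `ū` is a probability measure on `ℝ≥0` with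
finite second moment satisfying `T_B[ū,ū] = ū`, then `ū ≥ α² δ₀`; in particular
`ū({0}) ≥ α²`. -/
theorem stmt11 (B : Measure ℝ) [IsProbabilityMeasure B] (hB : B (Set.Icc (0:ℝ) 1)ᶜ = 0)
    (α : ℝ) (hα : 0 < α)
    (hBα : ENNReal.ofReal α • (Measure.dirac (0:ℝ) + Measure.dirac (1:ℝ)) ≤ B)
    (u : Measure ℝ) [IsProbabilityMeasure u] (hu0 : u (Set.Iio (0:ℝ)) = 0)
    (hu2 : ∫⁻ x, ENNReal.ofReal (1 + x ^ 2) ∂u ≠ ⊤)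
    (hfix : transferT B u u = u) :
    ENNReal.ofReal (α ^ 2) • Measure.dirac (0:ℝ) ≤ u ∧
      ENNReal.ofReal (α ^ 2) ≤ u {0} := by
  have hmeas : Measurable (fun q : (ℝ × ℝ) × ℝ × ℝ => q.2.1 * (1 - q.1.1) + q.2.2 * q.1.2) := by
    fun_prop
  have hB0 : ENNReal.ofReal α ≤ B {0} := by
    have h := hBα {0}
    simpa [Measure.dirac_apply', measurableSet_singleton] using h
  have hB1 : ENNReal.ofReal α ≤ B {1} := by
    have h := hBα {1}
    simpa [Measure.dirac_apply', measurableSet_singleton] using h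
  have hkey : ENNReal.ofReal (α ^ 2) ≤ u {0} := by
    conv_rhs => rw [← hfix]
    rw [transferT, Measure.map_apply hmeas (measurableSet_singleton 0)]
    have hsub : (({(1:ℝ)} ×ˢ {(0:ℝ)}) ×ˢ (Set.univ : Set (ℝ × ℝ))) ⊆
        (fun q : (ℝ × ℝ) × ℝ × ℝ => q.2.1 * (1 - q.1.1) + q.2.2 * q.1.2) ⁻¹' {0} := by
      rintro ⟨⟨z₁, z₂⟩, x₁, x₂⟩ ⟨⟨hz₁, hz₂⟩, -⟩
      simp only [Set.mem_singleton_iff] at hz₁ hz₂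
      subst hz₁; subst hz₂
      simp
    calc ENNReal.ofReal (α ^ 2)
        ≤ ((B.prod B).prod (u.prod u)) ((({(1:ℝ)} ×ˢ {(0:ℝ)}) ×ˢ (Set.univ : Set (ℝ × ℝ)))) := by
          rw [Measure.prod_prod, Measure.prod_prod]
          simp only [measure_univ, one_mul, mul_one]
          calc ENNReal.ofReal (α ^ 2) = ENNReal.ofReal α * ENNReal.ofReal α := by
                rw [← ENNReal.ofReal_mul hα.le]; ring_nf
            _ ≤ B {1} * B {0} := mul_le_mul' hB1 hB0
      _ ≤ _ := measure_mono hsub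
  refine ⟨?_, hkey⟩
  refine Measure.le_iff.mpr fun s hs => ?_
  rw [Measure.smul_apply, Measure.dirac_apply' _ hs]
  by_cases h0 : (0:ℝ) ∈ s
  · simp only [Set.indicator_of_mem h0, Pi.one_apply, smul_eq_mul, mul_one]
    exact hkey.trans (measure_mono (Set.singleton_subset_iff.mpr h0))
  · simp [Set.indicator_of_notMem h0]
end

section
/- Let B be a Borel probability measure on [0,1] with B ≠ δ₀ and B ≠ δ₁, and assume that B({0}) = 0 or B({1}) = 0. If ū is a Borel probability measure on ℝ≥0 with finite second moment satisfying T_B[ū, ū] = ū, then either ū = δ₀ or ū({0}) = 0. -/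
open MeasureTheory Filter Topology
open scoped ENNReal

/-- A probability measure giving mass 1 to a singleton is the Dirac measure. -/
lemma eq_dirac_of_singleton_aux {μ : Measure ℝ} [IsProbabilityMeasure μ] {x : ℝ}
    (h : μ {x} = 1) : μ = Measure.dirac x := by
  have hc : μ ({x}ᶜ) = 0 := by
    rw [prob_compl_eq_one_sub (measurableSet_singleton x), h, tsub_self]
  ext s hs
  rw [Measure.dirac_apply' _ hs]
  by_cases hx : x ∈ s
  · have hle : 1 ≤ μ s := h ▸ measure_mono (Set.singleton_subset_iff.2 hx)
    have hle' : μ s ≤ 1 := prob_le_one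
    simp [Set.indicator_of_mem hx, le_antisymm hle' hle]
  · have hsub : s ⊆ {x}ᶜ := fun y hy (he : y = x) => hx (he ▸ hy)
    simp [Set.indicator_of_notMem hx, measure_mono_null hsub hc]

/-- Algebraic resolution of the fixed-point equation for the atom at 0. -/
lemma resolve_aux {p e : ℝ≥0∞} (hp1 : p ≤ 1) (heq : p = (p + (1 - p) * e) * p)
    (he : e ≠ 1) : p = 0 ∨ p = 1 := by
  by_cases h0 : p = 0
  · exact Or.inl h0
  right
  by_contra hne
  have hpt : p ≠ ⊤ := ne_top_of_le_ne_top ENNReal.one_ne_top hp1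
  have hc : p + (1 - p) * e = 1 := by
    have h1 : p * 1 = p * (p + (1 - p) * e) := by
      rw [mul_one]; nth_rewrite 1 [heq]; rw [mul_comm]
    exact ((ENNReal.mul_right_inj h0 hpt).1 h1).symm
  have h2 : p + (1 - p) * 1 = 1 := by rw [mul_one, add_tsub_cancel_of_le hp1]
  have h3 : (1 - p) * e = (1 - p) * 1 :=
    (ENNReal.add_right_inj hpt).1 (hc.trans h2.symm)
  have hs0 : (1 : ℝ≥0∞) - p ≠ 0 := by
    rw [Ne, tsub_eq_zero_iff_le]
    exact fun hle => hne (le_antisymm hp1 hle)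
  have hst : (1 : ℝ≥0∞) - p ≠ ⊤ := ne_top_of_le_ne_top ENNReal.one_ne_top tsub_le_self
  exact he ((ENNReal.mul_right_inj hs0 hst).1 h3)

/-- If `B ≠ δ₀`, `B ≠ δ₁`, and `B({0}) = 0` or `B({1}) = 0`, then any fixed probability
distribution `ū` (with finite second moment) of the transfer operator satisfies
`ū = δ₀` or `ū({0}) = 0`. -/
theorem stmt12 (B : Measure ℝ) [IsProbabilityMeasure B] (hB : B (Set.Icc (0:ℝ) 1)ᶜ = 0)
    (hB0 : B ≠ Measure.dirac 0) (hB1 : B ≠ Measure.dirac 1)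
    (hBatom : B {0} = 0 ∨ B {1} = 0)
    (u : Measure ℝ) [IsProbabilityMeasure u] (hu0 : u (Set.Iio (0:ℝ)) = 0)
    (hu2 : ∫⁻ x, ENNReal.ofReal (1 + x ^ 2) ∂u ≠ ⊤)
    (hfix : transferT B u u = u) :
    u = Measure.dirac 0 ∨ u {0} = 0 := by
  classical
  set μ : Measure ((ℝ × ℝ) × ℝ × ℝ) := (B.prod B).prod (u.prod u) with hμ
  set m : (ℝ × ℝ) × ℝ × ℝ → ℝ := fun q => q.2.1 * (1 - q.1.1) + q.2.2 * q.1.2 with hm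
  have hmmeas : Measurable m := by fun_prop
  set p : ℝ≥0∞ := u {0} with hpdef
  have hp1 : p ≤ 1 := prob_le_one
  set a : ℝ≥0∞ := B {0} with hadef
  set b : ℝ≥0∞ := B {1} with hbdef
  -- the "good" set has full measure
  have hG : ∀ᵐ q ∂μ, q.1.1 ∈ Set.Icc (0:ℝ) 1 ∧ q.1.2 ∈ Set.Icc (0:ℝ) 1 ∧
      0 ≤ q.2.1 ∧ 0 ≤ q.2.2 := by
    have h1 : ∀ᵐ q ∂μ, q.1.1 ∈ Set.Icc (0:ℝ) 1 := by
      rw [ae_iff]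
      have hset : {q : (ℝ × ℝ) × ℝ × ℝ | ¬ q.1.1 ∈ Set.Icc (0:ℝ) 1}
          = ((Set.Icc (0:ℝ) 1)ᶜ ×ˢ Set.univ) ×ˢ (Set.univ : Set (ℝ × ℝ)) := by
        ext q; simp
      rw [hset, hμ, Measure.prod_prod, Measure.prod_prod]
      simp [hB]
    have h2 : ∀ᵐ q ∂μ, q.1.2 ∈ Set.Icc (0:ℝ) 1 := by
      rw [ae_iff]
      have hset : {q : (ℝ × ℝ) × ℝ × ℝ | ¬ q.1.2 ∈ Set.Icc (0:ℝ) 1}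
          = (Set.univ ×ˢ (Set.Icc (0:ℝ) 1)ᶜ) ×ˢ (Set.univ : Set (ℝ × ℝ)) := by
        ext q; simp
      rw [hset, hμ, Measure.prod_prod, Measure.prod_prod]
      simp [hB]
    have h3 : ∀ᵐ q ∂μ, 0 ≤ q.2.1 := by
      rw [ae_iff]
      have hset : {q : (ℝ × ℝ) × ℝ × ℝ | ¬ 0 ≤ q.2.1}
          = (Set.univ : Set (ℝ × ℝ)) ×ˢ (Set.Iio (0:ℝ) ×ˢ Set.univ) := by
        ext q; simp
      rw [hset, hμ, Measure.prod_prod, Measure.prod_prod]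
      simp [hu0]
    have h4 : ∀ᵐ q ∂μ, 0 ≤ q.2.2 := by
      rw [ae_iff]
      have hset : {q : (ℝ × ℝ) × ℝ × ℝ | ¬ 0 ≤ q.2.2}
          = (Set.univ : Set (ℝ × ℝ)) ×ˢ (Set.univ ×ˢ Set.Iio (0:ℝ)) := by
        ext q; simp
      rw [hset, hμ, Measure.prod_prod, Measure.prod_prod]
      simp [hu0]
    filter_upwards [h1, h2, h3, h4] with q q1 q2 q3 q4
    exact ⟨q1, q2, q3, q4⟩
  -- the event set
  set A : Set ((ℝ × ℝ) × ℝ × ℝ) :=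
    {q | (q.2.1 = 0 ∨ q.1.1 = 1) ∧ (q.2.2 = 0 ∨ q.1.2 = 0)} with hAdef
  have hAmeas : MeasurableSet A := by
    have : A = (((fun q : (ℝ × ℝ) × ℝ × ℝ => q.2.1) ⁻¹' {0})
          ∪ ((fun q : (ℝ × ℝ) × ℝ × ℝ => q.1.1) ⁻¹' {1}))
        ∩ (((fun q : (ℝ × ℝ) × ℝ × ℝ => q.2.2) ⁻¹' {0})
          ∪ ((fun q : (ℝ × ℝ) × ℝ × ℝ => q.1.2) ⁻¹' {0})) := by
      ext q; simp [hAdef]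
    rw [this]
    exact (((measurable_fst.comp measurable_snd) (measurableSet_singleton 0)).union
        ((measurable_fst.comp measurable_fst) (measurableSet_singleton 1))).inter
      (((measurable_snd.comp measurable_snd) (measurableSet_singleton 0)).union
        ((measurable_snd.comp measurable_fst) (measurableSet_singleton 0)))
  -- u {0} = μ (m ⁻¹' {0})
  have hstep1 : p = μ (m ⁻¹' {0}) := by
    conv_lhs => rw [hpdef, ← hfix]
    rw [transferT, Measure.map_apply hmmeas (measurableSet_singleton 0)]
  -- μ (m ⁻¹' {0}) = μ A
  have hstep2 : μ (m ⁻¹' {0}) = μ A := by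
    apply measure_congr
    rw [Filter.eventuallyEq_set]
    filter_upwards [hG] with q hq
    obtain ⟨⟨hz10, hz11⟩, ⟨hz20, hz21⟩, hx1, hx2⟩ := hq
    simp only [Set.mem_preimage, Set.mem_singleton_iff, hAdef, Set.mem_setOf_eq, hm]
    constructor
    · intro h
      have hprod1 : q.2.1 * (1 - q.1.1) = 0 := by
        have hn1 : 0 ≤ q.2.1 * (1 - q.1.1) := mul_nonneg hx1 (by linarith)
        have hn2 : 0 ≤ q.2.2 * q.1.2 := mul_nonneg hx2 hz20
        linarith
      have hprod2 : q.2.2 * q.1.2 = 0 := by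
        have hn1 : 0 ≤ q.2.1 * (1 - q.1.1) := mul_nonneg hx1 (by linarith)
        have hn2 : 0 ≤ q.2.2 * q.1.2 := mul_nonneg hx2 hz20
        linarith
      constructor
      · rcases mul_eq_zero.1 hprod1 with h' | h'
        · exact Or.inl h'
        · exact Or.inr (by linarith)
      · rcases mul_eq_zero.1 hprod2 with h' | h'
        · exact Or.inl h'
        · exact Or.inr h'
    · rintro ⟨h1 | h1, h2 | h2⟩ <;> rw [h1, h2] <;> ring
  -- compute μ A
  set f : ℝ → ℝ≥0∞ := fun t => if t = 1 then 1 else p with hfdef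
  set g : ℝ → ℝ≥0∞ := fun t => if t = 0 then 1 else p with hgdef
  have hfmeas : Measurable f := by
    apply Measurable.ite _ measurable_const measurable_const
    exact measurableSet_eq
  have hgmeas : Measurable g := by
    apply Measurable.ite _ measurable_const measurable_const
    exact measurableSet_eq
  have hslice : ∀ z : ℝ × ℝ, (u.prod u) (Prod.mk z ⁻¹' A) = f z.1 * g z.2 := by
    intro z
    have hset : Prod.mk z ⁻¹' A
        = {t : ℝ | t = 0 ∨ z.1 = 1} ×ˢ {t : ℝ | t = 0 ∨ z.2 = 0} := by
      ext x
      simp [hAdef, Set.mem_prod]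
    rw [hset, Measure.prod_prod]
    congr 1
    · by_cases h : z.1 = 1
      · simp [hfdef, h]
      · have : {t : ℝ | t = 0 ∨ z.1 = 1} = {0} := by ext t; simp [h]
        simp [hfdef, h, this, hpdef]
    · by_cases h : z.2 = 0
      · simp [hgdef, h]
      · have : {t : ℝ | t = 0 ∨ z.2 = 0} = {0} := by ext t; simp [h]
        simp [hgdef, h, this, hpdef]
  have hintf : ∫⁻ t, f t ∂B = p + (1 - p) * b := by
    have hfeq : ∀ t, f t = p + Set.indicator {1} (fun _ => 1 - p) t := by
      intro t
      by_cases h : t = 1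
      · simp [hfdef, h, add_tsub_cancel_of_le hp1]
      · simp [hfdef, h]
    rw [lintegral_congr hfeq,
      lintegral_add_left measurable_const, lintegral_const,
      lintegral_indicator (measurableSet_singleton 1), setLIntegral_const]
    simp [hbdef]
  have hintg : ∫⁻ t, g t ∂B = p + (1 - p) * a := by
    have hgeq : ∀ t, g t = p + Set.indicator {0} (fun _ => 1 - p) t := by
      intro t
      by_cases h : t = 0
      · simp [hgdef, h, add_tsub_cancel_of_le hp1]
      · simp [hgdef, h]
    rw [lintegral_congr hgeq,
      lintegral_add_left measurable_const, lintegral_const,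
      lintegral_indicator (measurableSet_singleton 0), setLIntegral_const]
    simp [hadef]
  have hstep3 : μ A = (p + (1 - p) * b) * (p + (1 - p) * a) := by
    rw [hμ, Measure.prod_apply hAmeas]
    calc ∫⁻ z, (u.prod u) (Prod.mk z ⁻¹' A) ∂B.prod B
        = ∫⁻ z : ℝ × ℝ, f z.1 * g z.2 ∂B.prod B := lintegral_congr hslice
      _ = (∫⁻ t, f t ∂B) * ∫⁻ t, g t ∂B :=
          lintegral_prod_mul hfmeas.aemeasurable hgmeas.aemeasurable
      _ = (p + (1 - p) * b) * (p + (1 - p) * a) := by rw [hintf, hintg]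
  have hkey : p = (p + (1 - p) * b) * (p + (1 - p) * a) :=
    (hstep1.trans hstep2).trans hstep3
  -- B is not δ₀ or δ₁
  have ha1 : a ≠ 1 := fun h => hB0 (eq_dirac_of_singleton_aux h)
  have hb1 : b ≠ 1 := fun h => hB1 (eq_dirac_of_singleton_aux h)
  have hp01 : p = 0 ∨ p = 1 := by
    rcases hBatom with ha0 | hb0
    · have ha0' : a = 0 := ha0
      have heq2 : p = (p + (1 - p) * b) * p := by
        conv_lhs => rw [hkey]
        rw [ha0', mul_zero, add_zero]
      exact resolve_aux hp1 heq2 hb1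
    · have hb0' : b = 0 := hb0
      have heq2 : p = (p + (1 - p) * a) * p := by
        conv_lhs => rw [hkey]
        rw [hb0', mul_zero, add_zero, mul_comm]
      exact resolve_aux hp1 heq2 ha1
  rcases hp01 with h | h
  · exact Or.inr h
  · exact Or.inl (eq_dirac_of_singleton_aux h)
end

section
/- Let B be a Borel probability measure on [0,1] and let Z > 0. If T_B[δ_Z, δ_Z] = δ_Z, then B is a Dirac measure: B = δ_p for some p ∈ [0,1]. -/
open MeasureTheory Filter Topology

/-! Since `Z ≠ 0`, `T_B[δ_Z, δ_Z] = δ_Z` says that two independent samples `z₁, z₂` of `B`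
satisfy `Z (1 - z₁) + Z z₂ = Z`, i.e. `z₁ = z₂`, almost surely. For a measurable `s` this gives
`B s * B sᶜ = (B ⊗ B) (s ×ˢ sᶜ) = 0`, so `B` only takes the values `0` and `1`, and a zero-one
probability measure on a standard Borel space is a Dirac mass. -/

namespace MeasureTheory.Measure

variable {α : Type*} [MeasurableSpace α] {μ : Measure α} [IsProbabilityMeasure μ]

theorem isZeroOneMeasure_of_ae_prod_fst_eq_snd (h : ∀ᵐ z ∂μ.prod μ, z.1 = z.2) :
    IsZeroOneMeasure μ where
  zero_one₀ s hs := by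
    have hoff : (μ.prod μ) (s ×ˢ sᶜ) = 0 :=
      measure_mono_null (fun z hz (heq : z.1 = z.2) => hz.2 (heq ▸ hz.1)) (ae_iff.1 h)
    rwa [prod_prod, mul_eq_zero, prob_compl_eq_zero_iff hs] at hoff

theorem exists_eq_dirac_of_ae_prod_fst_eq_snd [StandardBorelSpace α]
    (h : ∀ᵐ z ∂μ.prod μ, z.1 = z.2) : ∃ x, μ = dirac x :=
  haveI := isZeroOneMeasure_of_ae_prod_fst_eq_snd h
  IsZeroOneMeasure.exists_eq_dirac

end MeasureTheory.Measure

theorem transferT_dirac_dirac (B : Measure ℝ) [SFinite B] (x y : ℝ) :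
    transferT B (Measure.dirac x) (Measure.dirac y) =
      (B.prod B).map (fun z : ℝ × ℝ => x * (1 - z.1) + y * z.2) := by
  rw [transferT, Measure.dirac_prod_dirac, Measure.prod_dirac,
    Measure.map_map (by fun_prop) measurable_prodMk_right]
  rfl

/-- If `Z > 0` and `T_B[δ_Z, δ_Z] = δ_Z`, then the transfer kernel `B` is a Dirac mass:
`B = δ_p` for some `p ∈ [0,1]`. -/
theorem stmt14 (B : Measure ℝ) [IsProbabilityMeasure B] (hB : B (Set.Icc (0:ℝ) 1)ᶜ = 0)
    (Z : ℝ) (hZ : 0 < Z)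
    (hfix : transferT B (Measure.dirac Z) (Measure.dirac Z) = Measure.dirac Z) :
    ∃ p ∈ Set.Icc (0:ℝ) 1, B = Measure.dirac p := by
  have hsum : ∀ᵐ z ∂B.prod B, Z * (1 - z.1) + Z * z.2 = Z := by
    have hmeas : Measurable fun z : ℝ × ℝ => Z * (1 - z.1) + Z * z.2 := by fun_prop
    refine (ae_map_iff hmeas.aemeasurable (measurableSet_singleton Z)).1 ?_
    rw [← transferT_dirac_dirac, hfix]
    exact (ae_dirac_iff (measurableSet_singleton Z)).2 rfl
  have hdiag : ∀ᵐ z ∂B.prod B, z.1 = z.2 := by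
    filter_upwards [hsum] with z hz
    have : Z * (z.2 - z.1) = 0 := by linarith
    simpa [hZ.ne', sub_eq_zero, eq_comm] using this
  obtain ⟨p, rfl⟩ := Measure.exists_eq_dirac_of_ae_prod_fst_eq_snd hdiag
  refine ⟨p, ?_, rfl⟩
  simpa [Measure.dirac_apply' _ measurableSet_Icc.compl] using hB
end

section
/- Let B be a Borel probability measure on [0,1], and suppose there are p ∈ (0,1), ε ∈ (0,1) and b > 0 with [p−ε, p+ε] ⊂ (0,1) and B ≥ b·1_{[p−ε,p+ε]}·Leb (Leb denoting Lebesgue measure). Let ū be a Borel probability measure on ℝ≥0 with finite second moment, let x̄ > 0, and set α = εx̄/16. Then, as measures on ℝ≥0, T_B[ū, ū] ≥ (εb²/(2x̄+1)) · (ū([x̄−α, x̄+α]))² · 1_{[x̄−α, x̄+α]}·Leb. -/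
open MeasureTheory Filter Topology

/-!
Bound `B` below by `b • Leb` on `J = [p - ε, p + ε]` and restrict `ū` to the window
`I = [x̄ - α, x̄ + α]`. For fixed `x₁, x₂ ∈ I`, the law of `x₁ (1 - z₁) + x₂ z₂` under
`Leb_J ⊗ Leb_J` is `(x₁ x₂)⁻¹` times the convolution of Lebesgue measure on the intervals
`x₁ (1 - J)` and `x₂ J`, of lengths `2 ε x₁, 2 ε x₂ ≥ ε x̄`. Such a convolution has density at least
`ε x̄` on its support shrunk by `ε x̄` at both ends, an interval with centre `x₁ (1 - p) + x₂ p ∈ I`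
and half-width `ε (x₁ + x₂ - x̄) ≥ 7 ε x̄ / 8`, hence containing `I`. As `x₁ x₂ ≤ x̄ (2 x̄ + 1)`, the law
dominates `ε / (2 x̄ + 1) • Leb_I`, and integrating over `(x₁, x₂) ∈ I²` against `ū ⊗ ū`
gives the factor `ū(I)²`.
-/

open Set

namespace MeasureTheory.Measure

lemma map_const_mul_volume_restrict_Icc {r : ℝ} (hr : 0 < r) (a b : ℝ) :
    (volume.restrict (Icc a b)).map (r * ·) =
      ENNReal.ofReal r⁻¹ • volume.restrict (Icc (r * a) (r * b)) := by
  rw [← abs_of_pos (inv_pos.2 hr), ← restrict_smul, ← Real.map_volume_mul_left hr.ne',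
    (measurableEmbedding_mulLeft₀ hr.ne').restrict_map, preimage_const_mul_Icc₀ _ _ hr,
    mul_div_cancel_left₀ _ hr.ne', mul_div_cancel_left₀ _ hr.ne']

lemma map_const_sub_volume_restrict_Icc (c a b : ℝ) :
    (volume.restrict (Icc a b)).map (c - ·) = volume.restrict (Icc (c - b) (c - a)) := by
  have he : MeasurableEmbedding (c - ·) := (MeasurableEquiv.subLeft c).measurableEmbedding
  conv_rhs => rw [← map_sub_left_eq_self volume c, he.restrict_map, preimage_const_sub_Icc,
    sub_sub_cancel, sub_sub_cancel]

lemma map_affine_volume_restrict_Icc_prod {x₁ x₂ : ℝ} (h₁ : 0 < x₁) (h₂ : 0 < x₂)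
    (a b c d : ℝ) :
    ((volume.restrict (Icc a b)).prod (volume.restrict (Icc c d))).map
        (fun z => x₁ * (1 - z.1) + x₂ * z.2) =
      ENNReal.ofReal (x₁ * x₂)⁻¹ • (volume.restrict (Icc (x₁ * (1 - b)) (x₁ * (1 - a))) ∗
        volume.restrict (Icc (x₂ * c) (x₂ * d))) := by
  have hsplit : (fun z : ℝ × ℝ => x₁ * (1 - z.1) + x₂ * z.2) =
      (fun w => w.1 + w.2) ∘ Prod.map ((x₁ * ·) ∘ (1 - ·)) (x₂ * ·) := rfl
  rw [hsplit, ← map_map measurable_add (by fun_prop), ← map_prod_map _ _ (by fun_prop)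
    (by fun_prop), ← map_map (by fun_prop) (by fun_prop), map_const_sub_volume_restrict_Icc,
    map_const_mul_volume_restrict_Icc h₁, map_const_mul_volume_restrict_Icc h₂, ← conv,
    conv_smul_left, conv_smul_right, smul_smul, ← ENNReal.ofReal_mul (by positivity), mul_inv]

lemma ofReal_smul_volume_restrict_Icc_le_conv {a b c d δ : ℝ} (hab : δ ≤ b - a)
    (hcd : δ ≤ d - c) :
    ENNReal.ofReal δ • volume.restrict (Icc (a + c + δ) (b + d - δ)) ≤
      volume.restrict (Icc a b) ∗ volume.restrict (Icc c d) := by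
  refine le_iff.2 fun A hA => ?_
  -- the shear `(x, y) ↦ (x, x + y)` turns `(Leb_[a,b] ∗ Leb_[c,d]) A` into the area of `S`
  set S : Set (ℝ × ℝ) := {w | w.1 ∈ Icc a b ∧ w.2 - w.1 ∈ Icc c d ∧ w.2 ∈ A}
  have hS : MeasurableSet S :=
    (measurable_fst measurableSet_Icc).inter
      (((measurable_snd.sub measurable_fst) measurableSet_Icc).inter (measurable_snd hA))
  have hconv : (volume.restrict (Icc a b) ∗ volume.restrict (Icc c d)) A =
      (volume.prod volume) S := by
    rw [conv, map_apply measurable_add hA, prod_restrict, restrict_apply (measurable_add hA),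
      ← (measurePreserving_prod_add volume volume).measure_preimage hS.nullMeasurableSet]
    congr 1
    ext ⟨x, y⟩
    simp only [S, mem_inter_iff, mem_preimage, mem_prod, mem_ofPred_eq, add_sub_cancel_left]
    tauto
  have hslice (y : ℝ) (hy : y ∈ A) :
      Icc (max a (y - d)) (min b (y - c)) ⊆ (fun x => (x, y)) ⁻¹' S := by
    rintro x ⟨h1, h2⟩
    simp only [max_le_iff, le_min_iff] at h1 h2
    exact ⟨⟨h1.1, h2.1⟩, ⟨by linarith, by linarith⟩, hy⟩
  rw [hconv, prod_apply_symm hS, smul_apply, restrict_apply hA, smul_eq_mul,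
    ← lintegral_indicator_const (hA.inter measurableSet_Icc)]
  refine lintegral_mono fun y => ?_
  by_cases hy : y ∈ A ∩ Icc (a + c + δ) (b + d - δ)
  · rw [indicator_of_mem hy]
    refine le_trans ?_ (measure_mono (hslice y hy.1))
    rw [Real.volume_Icc]
    refine ENNReal.ofReal_le_ofReal ?_
    obtain ⟨-, h1, h2⟩ := hy
    rw [le_sub_iff_add_le, le_min_iff]
    constructor <;> exact add_le_of_le_sub_left (max_le (by linarith) (by linarith))
  · rw [indicator_of_notMem hy]
    exact zero_le

lemma smul_le_map_prod_of_forall_le_map {α β γ : Type*} [MeasurableSpace α]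
    [MeasurableSpace β] [MeasurableSpace γ] {μ : Measure α} {ν : Measure β} [SFinite μ]
    [SFinite ν] {f : α × β → γ} (hf : Measurable f) {ρ : Measure γ} {s : Set β}
    (hs : MeasurableSet s) (h : ∀ y ∈ s, ρ ≤ μ.map (fun x => f (x, y))) :
    ν s • ρ ≤ (μ.prod ν).map f := by
  refine le_iff.2 fun A hA => ?_
  rw [smul_apply, smul_eq_mul, mul_comm, ← lintegral_indicator_const hs, map_apply hf hA,
    prod_apply_symm (hf hA)]
  refine lintegral_mono fun y => ?_
  by_cases hy : y ∈ s
  · rw [indicator_of_mem hy]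
    exact (h y hy A).trans_eq (map_apply (hf.comp measurable_prodMk_right) hA)
  · rw [indicator_of_notMem hy]
    exact zero_le

end MeasureTheory.Measure

def window (xb ε : ℝ) : Set ℝ := Icc (xb - ε * xb / 16) (xb + ε * xb / 16)

section Window

variable {p ε xb x₁ x₂ : ℝ}

lemma window_subset_Icc (hp : p ∈ Icc (0 : ℝ) 1) (hε : ε ∈ Icc (0 : ℝ) 1)
    (hx₁ : x₁ ∈ window xb ε) (hx₂ : x₂ ∈ window xb ε) :
    window xb ε ⊆ Icc (x₁ * (1 - (p + ε)) + x₂ * (p - ε) + ε * xb)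
      (x₁ * (1 - (p - ε)) + x₂ * (p + ε) - ε * xb) := by
  obtain ⟨hp0, hp1⟩ := hp
  obtain ⟨hε0, hε1⟩ := hε
  obtain ⟨h₁l, h₁u⟩ := hx₁
  obtain ⟨h₂l, h₂u⟩ := hx₂
  rintro y ⟨hyl, hyu⟩
  constructor
  · nlinarith [mul_le_mul_of_nonneg_left h₁u (sub_nonneg.2 hp1),
      mul_le_mul_of_nonneg_left h₂u hp0, mul_le_mul_of_nonneg_left h₁l hε0,
      mul_le_mul_of_nonneg_left h₂l hε0]
  · nlinarith [mul_le_mul_of_nonneg_left h₁l (sub_nonneg.2 hp1),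
      mul_le_mul_of_nonneg_left h₂l hp0, mul_le_mul_of_nonneg_left h₁l hε0,
      mul_le_mul_of_nonneg_left h₂l hε0]

lemma div_le_inv_mul_of_mem_window (hε : ε ∈ Icc (0 : ℝ) 1) (hxb : 0 < xb)
    (hx₁ : x₁ ∈ window xb ε) (hx₂ : x₂ ∈ window xb ε) :
    ε / (2 * xb + 1) ≤ (x₁ * x₂)⁻¹ * (ε * xb) := by
  obtain ⟨hε0, hε1⟩ := hε
  have h₁ : 0 < x₁ := by nlinarith [hx₁.1]
  have h₂ : 0 < x₂ := by nlinarith [hx₂.1]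
  have h17 : xb + ε * xb / 16 ≤ 17 / 16 * xb := by
    linarith [mul_le_of_le_one_left hxb.le hε1]
  have hprod : x₁ * x₂ ≤ xb * (2 * xb + 1) := by
    nlinarith [mul_le_mul (hx₁.2.trans h17) (hx₂.2.trans h17) h₂.le (by positivity)]
  rw [inv_mul_eq_div, div_le_div_iff₀ (by positivity) (by positivity)]
  nlinarith [mul_le_mul_of_nonneg_left hprod hε0]

lemma smul_volume_restrict_window_le_map (hp : p ∈ Icc (0 : ℝ) 1) (hε : ε ∈ Icc (0 : ℝ) 1)
    (hxb : 0 < xb) (hx₁ : x₁ ∈ window xb ε) (hx₂ : x₂ ∈ window xb ε) :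
    ENNReal.ofReal (ε / (2 * xb + 1)) • volume.restrict (window xb ε) ≤
      ((volume.restrict (Icc (p - ε) (p + ε))).prod (volume.restrict (Icc (p - ε) (p + ε)))).map
        (fun z => x₁ * (1 - z.1) + x₂ * z.2) := by
  have h₁ : xb ≤ 2 * x₁ := by nlinarith [hx₁.1, hε.2]
  have h₂ : xb ≤ 2 * x₂ := by nlinarith [hx₂.1, hε.2]
  rw [Measure.map_affine_volume_restrict_Icc_prod (by linarith) (by linarith)]
  calc _ ≤ (ENNReal.ofReal (x₁ * x₂)⁻¹ * ENNReal.ofReal (ε * xb)) •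
        volume.restrict (Icc (x₁ * (1 - (p + ε)) + x₂ * (p - ε) + ε * xb)
          (x₁ * (1 - (p - ε)) + x₂ * (p + ε) - ε * xb)) := by
        rw [← ENNReal.ofReal_mul (inv_nonneg.2 (by nlinarith))]
        gcongr ENNReal.ofReal ?_ • volume.restrict ?_
        · exact div_le_inv_mul_of_mem_window hε hxb hx₁ hx₂
        · exact window_subset_Icc hp hε hx₁ hx₂
    _ ≤ _ := by
        rw [mul_smul]
        gcongr
        exact Measure.ofReal_smul_volume_restrict_Icc_le_conv
          (by nlinarith [mul_le_mul_of_nonneg_left h₁ hε.1])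
          (by nlinarith [mul_le_mul_of_nonneg_left h₂ hε.1])

end Window

theorem stmt17_general (B : Measure ℝ) [IsProbabilityMeasure B]
    (p ε b : ℝ) (hp : p ∈ Set.Ioo (0:ℝ) 1) (hε : ε ∈ Set.Ioo (0:ℝ) 1) (hb : 0 < b)
    (hlb : ENNReal.ofReal b • volume.restrict (Set.Icc (p - ε) (p + ε)) ≤ B)
    (u : Measure ℝ) [IsProbabilityMeasure u]
    (xb : ℝ) (hxb : 0 < xb) :
    (ENNReal.ofReal (ε * b ^ 2 / (2 * xb + 1)) *
        (u (Set.Icc (xb - ε * xb / 16) (xb + ε * xb / 16))) ^ 2) •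
      volume.restrict (Set.Icc (xb - ε * xb / 16) (xb + ε * xb / 16))
      ≤ transferT B u u := by
  change (ENNReal.ofReal (ε * b ^ 2 / (2 * xb + 1)) * u (window xb ε) ^ 2) •
    volume.restrict (window xb ε) ≤ transferT B u u
  set μJ := volume.restrict (Icc (p - ε) (p + ε))
  have hBB : ENNReal.ofReal b ^ 2 • μJ.prod μJ ≤ B.prod B := by
    rw [sq, ← smul_smul, ← Measure.prod_smul_left, ← Measure.prod_smul_right]
    exact Measure.prod_mono hlb hlb
  have hslice : ∀ x ∈ window xb ε ×ˢ window xb ε,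
      (ENNReal.ofReal b ^ 2 * ENNReal.ofReal (ε / (2 * xb + 1))) •
        volume.restrict (window xb ε) ≤ (B.prod B).map (fun z => x.1 * (1 - z.1) + x.2 * z.2) :=
    fun x hx => calc
      _ = ENNReal.ofReal b ^ 2 • ENNReal.ofReal (ε / (2 * xb + 1)) •
          volume.restrict (window xb ε) := mul_smul _ _ _
      _ ≤ ENNReal.ofReal b ^ 2 • (μJ.prod μJ).map (fun z => x.1 * (1 - z.1) + x.2 * z.2) := by
          gcongr
          exact smul_volume_restrict_window_le_map (Ioo_subset_Icc_self hp)
            (Ioo_subset_Icc_self hε) hxb hx.1 hx.2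
      _ ≤ _ := by
          rw [← Measure.map_smul]
          exact Measure.map_mono hBB (by fun_prop)
  have key := Measure.smul_le_map_prod_of_forall_le_map (μ := B.prod B) (ν := u.prod u)
    (f := fun q : (ℝ × ℝ) × ℝ × ℝ => q.2.1 * (1 - q.1.1) + q.2.2 * q.1.2)
    (s := window xb ε ×ˢ window xb ε) (by fun_prop) (measurableSet_Icc.prod measurableSet_Icc)
    hslice
  rw [Measure.prod_prod, smul_smul, ← sq, mul_comm] at key
  rw [transferT]
  convert key using 3
  rw [show ε * b ^ 2 / (2 * xb + 1) = b ^ 2 * (ε / (2 * xb + 1)) by ring,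
    ENNReal.ofReal_mul (sq_nonneg b), ENNReal.ofReal_pow hb.le]

/-- Quantitative lower bound on `T_B[ū,ū]`: if `B ≥ b·1_{[p-ε,p+ε]}·Leb` with
`[p-ε,p+ε] ⊂ (0,1)`, then for any probability measure `ū` on `ℝ≥0` with finite second
moment, any `x̄ > 0` and `α = ε x̄ / 16`,
`T_B[ū,ū] ≥ (ε b²/(2x̄+1)) · ū([x̄-α, x̄+α])² · 1_{[x̄-α, x̄+α]}·Leb`. -/
theorem stmt17 (B : Measure ℝ) [IsProbabilityMeasure B] (hB : B (Set.Icc (0:ℝ) 1)ᶜ = 0)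
    (p ε b : ℝ) (hp : p ∈ Set.Ioo (0:ℝ) 1) (hε : ε ∈ Set.Ioo (0:ℝ) 1) (hb : 0 < b)
    (hsub : Set.Icc (p - ε) (p + ε) ⊆ Set.Ioo (0:ℝ) 1)
    (hlb : ENNReal.ofReal b • volume.restrict (Set.Icc (p - ε) (p + ε)) ≤ B)
    (u : Measure ℝ) [IsProbabilityMeasure u] (hu0 : u (Set.Iio (0:ℝ)) = 0)
    (hu2 : ∫⁻ x, ENNReal.ofReal (1 + x ^ 2) ∂u ≠ ⊤)
    (xb : ℝ) (hxb : 0 < xb) :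
    (ENNReal.ofReal (ε * b ^ 2 / (2 * xb + 1)) *
        (u (Set.Icc (xb - ε * xb / 16) (xb + ε * xb / 16))) ^ 2) •
      volume.restrict (Set.Icc (xb - ε * xb / 16) (xb + ε * xb / 16))
      ≤ transferT B u u :=
  stmt17_general B p ε b hp hε hb hlb u xb hxb
end
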